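/- Let μ₁ > μ₂ ≥ ... ≥ μ_k > 0, mₐ > 0, cᵢ ≥ 0, dₐ ≥ 0, with either some dₐ > 0 or some cᵢ > 0 for an index i with μᵢ < μ₁. If δ⁻, δ⁺ ∈ (0, π/μ₁) satisfy 2 = Σᵢ μᵢ cᵢ cot(μᵢ δ⁻) + Σₐ mₐ dₐ coth(mₐ δ⁻) and −2 = Σᵢ μᵢ cᵢ cot(μᵢ δ⁺) + Σₐ mₐ dₐ coth(mₐ δ⁺), then δ⁺ + δ⁻ > π/μ₁ strictly. -/

import Mathlib

/-!
Adding the two defining equations gives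
`0 = ∑ᵢ μᵢ cᵢ (cot (μᵢ δ⁻) + cot (μᵢ δ⁺)) + ∑ₐ mₐ dₐ (coth (mₐ δ⁻) + coth (mₐ δ⁺))`.
If `δ⁺ + δ⁻ ≤ π / μ₁`, then `μᵢ (δ⁻ + δ⁺) ≤ π` for every `i`, and
`cot x + cot y = sin (x + y) / (sin x sin y)` makes every summand nonnegative; the
nondegeneracy hypothesis provides a strictly positive one, a contradiction.
-/

noncomputable def coth (x : ℝ) : ℝ := Real.cosh x / Real.sinh x

open Real Finset

lemma coth_pos {x : ℝ} (hx : 0 < x) : 0 < coth x :=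
  div_pos (cosh_pos x) (sinh_pos_iff.mpr hx)

lemma Real.cot_add_cot {x y : ℝ} (hx : sin x ≠ 0) (hy : sin y ≠ 0) :
    cot x + cot y = sin (x + y) / (sin x * sin y) := by
  rw [cot_eq_cos_div_sin, cot_eq_cos_div_sin, sin_add]
  field_simp
  ring

lemma Real.cot_mul_add_cot_mul_nonneg {μ x y : ℝ} (hμ : 0 < μ) (hx : 0 < x) (hy : 0 < y)
    (h : μ * (x + y) ≤ π) : 0 ≤ cot (μ * x) + cot (μ * y) := by
  have hμx : 0 < sin (μ * x) := sin_pos_of_pos_of_lt_pi (by positivity) (by nlinarith)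
  have hμy : 0 < sin (μ * y) := sin_pos_of_pos_of_lt_pi (by positivity) (by nlinarith)
  rw [cot_add_cot hμx.ne' hμy.ne', ← mul_add]
  exact div_nonneg (sin_nonneg_of_nonneg_of_le_pi (by positivity) h) (by positivity)

lemma Real.cot_mul_add_cot_mul_pos {μ x y : ℝ} (hμ : 0 < μ) (hx : 0 < x) (hy : 0 < y)
    (h : μ * (x + y) < π) : 0 < cot (μ * x) + cot (μ * y) := by
  have hμx : 0 < sin (μ * x) := sin_pos_of_pos_of_lt_pi (by positivity) (by nlinarith)
  have hμy : 0 < sin (μ * y) := sin_pos_of_pos_of_lt_pi (by positivity) (by nlinarith)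
  rw [cot_add_cot hμx.ne' hμy.ne', ← mul_add]
  exact div_pos (sin_pos_of_pos_of_lt_pi (by positivity) h) (by positivity)

lemma Finset.sum_add_sum_pos {ι κ : Type*} [Fintype ι] [Fintype κ] {f : ι → ℝ} {g : κ → ℝ}
    (hf : ∀ i, 0 ≤ f i) (hg : ∀ a, 0 ≤ g a) (h : (∃ a, 0 < g a) ∨ ∃ i, 0 < f i) :
    0 < ∑ i, f i + ∑ a, g a := by
  have hF := sum_nonneg fun i (_ : i ∈ univ) ↦ hf i
  have hG := sum_nonneg fun a (_ : a ∈ univ) ↦ hg a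
  rcases h with ⟨a, ha⟩ | ⟨i, hi⟩
  · linarith [sum_pos' (fun b _ ↦ hg b) ⟨a, mem_univ a, ha⟩]
  · linarith [sum_pos' (fun j _ ↦ hf j) ⟨i, mem_univ i, hi⟩]

theorem delta_sum_gt_general (k l : ℕ) (hk : 0 < k)
    (μ : Fin k → ℝ) (m : Fin l → ℝ) (c : Fin k → ℝ) (d : Fin l → ℝ)
    (hμpos : ∀ i, 0 < μ i) (hμmono : ∀ i j : Fin k, i ≤ j → μ j ≤ μ i)
    (hm : ∀ a, 0 < m a) (hc : ∀ i, 0 ≤ c i) (hd : ∀ a, 0 ≤ d a)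
    (hnz : (∃ a, 0 < d a) ∨ (∃ i, μ i < μ ⟨0, hk⟩ ∧ 0 < c i))
    (δm δp : ℝ)
    (hδm : δm ∈ Set.Ioo 0 (Real.pi / μ ⟨0, hk⟩))
    (hδp : δp ∈ Set.Ioo 0 (Real.pi / μ ⟨0, hk⟩))
    (heqm : 2 = (∑ i, μ i * c i * Real.cot (μ i * δm)) +
      ∑ a, m a * d a * coth (m a * δm))
    (heqp : -2 = (∑ i, μ i * c i * Real.cot (μ i * δp)) +
      ∑ a, m a * d a * coth (m a * δp)) :
    δp + δm > Real.pi / μ ⟨0, hk⟩ := by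
  by_contra! hle
  have hδm0 := hδm.1
  have hδp0 := hδp.1
  have htop : μ ⟨0, hk⟩ * (δm + δp) ≤ π := by
    rw [add_comm, ← le_div_iff₀' (hμpos _)]; exact hle
  have hμ : ∀ i, μ i * (δm + δp) ≤ π := fun i ↦
    (mul_le_mul_of_nonneg_right (hμmono _ i (Nat.zero_le _)) (by positivity)).trans htop
  have hcot : ∀ i, 0 ≤ μ i * c i * (cot (μ i * δm) + cot (μ i * δp)) := fun i ↦
    mul_nonneg (mul_nonneg (hμpos i).le (hc i))
      (cot_mul_add_cot_mul_nonneg (hμpos i) hδm0 hδp0 (hμ i))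
  have hcoth_add : ∀ a, 0 < coth (m a * δm) + coth (m a * δp) := fun a ↦
    add_pos (coth_pos (mul_pos (hm a) hδm0)) (coth_pos (mul_pos (hm a) hδp0))
  have hcoth : ∀ a, 0 ≤ m a * d a * (coth (m a * δm) + coth (m a * δp)) := fun a ↦
    mul_nonneg (mul_nonneg (hm a).le (hd a)) (hcoth_add a).le
  have hpos := sum_add_sum_pos hcot hcoth <| hnz.imp
    (fun ⟨a, ha⟩ ↦ ⟨a, mul_pos (mul_pos (hm a) ha) (hcoth_add a)⟩)
    (fun ⟨i, hμi, hci⟩ ↦ ⟨i, mul_pos (mul_pos (hμpos i) hci)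
      (cot_mul_add_cot_mul_pos (hμpos i) hδm0 hδp0
        ((mul_lt_mul_of_pos_right hμi (by positivity)).trans_le htop))⟩)
  simp only [mul_add, sum_add_distrib] at hpos
  linarith

theorem delta_sum_gt (k l : ℕ) (hk : 0 < k)
    (μ : Fin k → ℝ) (m : Fin l → ℝ) (c : Fin k → ℝ) (d : Fin l → ℝ)
    (hμpos : ∀ i, 0 < μ i) (hμmono : ∀ i j : Fin k, i ≤ j → μ j ≤ μ i)
    (hμtop : ∀ i : Fin k, i ≠ ⟨0, hk⟩ → μ i < μ ⟨0, hk⟩)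
    (hm : ∀ a, 0 < m a) (hc : ∀ i, 0 ≤ c i) (hd : ∀ a, 0 ≤ d a)
    (hnz : (∃ a, 0 < d a) ∨ (∃ i, μ i < μ ⟨0, hk⟩ ∧ 0 < c i))
    (δm δp : ℝ)
    (hδm : δm ∈ Set.Ioo 0 (Real.pi / μ ⟨0, hk⟩))
    (hδp : δp ∈ Set.Ioo 0 (Real.pi / μ ⟨0, hk⟩))
    (heqm : 2 = (∑ i, μ i * c i * Real.cot (μ i * δm)) +
      ∑ a, m a * d a * coth (m a * δm))
    (heqp : -2 = (∑ i, μ i * c i * Real.cot (μ i * δp)) +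
      ∑ a, m a * d a * coth (m a * δp)) :
    δp + δm > Real.pi / μ ⟨0, hk⟩ :=
  delta_sum_gt_general k l hk μ m c d hμpos hμmono hm hc hd hnz δm δp hδm hδp heqm heqp
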